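/- Assume the subsonic condition γρ*^{γ−1} > m*²/ρ*². Then there exist constants C > 0 and ω₀ > 0 such that for every ξ ∈ ℝ and every differentiable function U = (U₁, U₂) : [0, ∞) → ℂ² satisfying U'(t) = −( iξ·A(ξ) + B(ξ) )·U(t) for all t ≥ 0, one has (1 + ξ²)·|U₁(t)|² + |U₂(t)|² ≤ C·exp(−2ω₀ ξ² t)·( (1 + ξ²)·|U₁(0)|² + |U₂(0)|² ) for all t ≥ 0. -/

import Mathlib

open Matrix

/-- `α(ξ) = p'(ρ*) − m*²/ρ*² + (k²/2)ξ²` with `p(ρ) = ρ^γ`. -/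
noncomputable def alphaSym (ρs ms k γ ξ : ℝ) : ℝ :=
  γ * ρs ^ (γ - 1) - ms ^ 2 / ρs ^ 2 + k ^ 2 / 2 * ξ ^ 2

/-- The symbol `A(ξ) = [[0,1],[α(ξ), 2m*/ρ*]]` of the linearized viscous QHD system, over `ℂ`. -/
noncomputable def Asym (ρs ms k γ ξ : ℝ) : Matrix (Fin 2) (Fin 2) ℂ :=
  !![0, 1; ((alphaSym ρs ms k γ ξ : ℝ) : ℂ), ((2 * ms / ρs : ℝ) : ℂ)]

/-- The viscosity symbol `B(ξ) = ξ²·diag(0,μ)`, over `ℂ`. -/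
noncomputable def Bsym (μ ξ : ℝ) : Matrix (Fin 2) (Fin 2) ℂ :=
  !![0, 0; 0, ((ξ ^ 2 * μ : ℝ) : ℂ)]

/-- Lower equivalence bound for the compensated energy. -/
lemma qhd_low (c1 ε ξ αv p q r s : ℝ) (hc1 : 0 < c1) (hc11 : c1 ≤ 1)
    (hα : c1 * (1 + ξ ^ 2) ≤ αv) (hε : 0 < ε) (hεc : ε ≤ c1 / 2) :
    c1 / 2 * ((1 + ξ ^ 2) * (p ^ 2 + q ^ 2) + (r ^ 2 + s ^ 2)) ≤
      αv * (p ^ 2 + q ^ 2) + (r ^ 2 + s ^ 2) - ε * ξ * (r * q - p * s) := by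
  nlinarith [mul_le_mul_of_nonneg_right hα (by positivity : (0:ℝ) ≤ p ^ 2 + q ^ 2),
    mul_nonneg hε.le (sq_nonneg (ξ * q - r)), mul_nonneg hε.le (sq_nonneg (ξ * p + s)),
    mul_nonneg (by linarith : (0:ℝ) ≤ c1 / 2 - ε)
      (by positivity : (0:ℝ) ≤ ξ ^ 2 * (p ^ 2 + q ^ 2) + (r ^ 2 + s ^ 2)),
    mul_nonneg (mul_nonneg hc1.le (sq_nonneg ξ)) (by positivity : (0:ℝ) ≤ p ^ 2 + q ^ 2),
    sq_nonneg r, sq_nonneg s]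

/-- Upper equivalence bound for the compensated energy. -/
lemma qhd_up (cU ε ξ αv p q r s : ℝ) (hcU : 2 ≤ cU)
    (hα : αv ≤ (cU - 1) * (1 + ξ ^ 2)) (hε : 0 < ε) (hεc : ε ≤ 1) :
    αv * (p ^ 2 + q ^ 2) + (r ^ 2 + s ^ 2) - ε * ξ * (r * q - p * s) ≤
      cU * ((1 + ξ ^ 2) * (p ^ 2 + q ^ 2) + (r ^ 2 + s ^ 2)) := by
  nlinarith [mul_le_mul_of_nonneg_right hα (by positivity : (0:ℝ) ≤ p ^ 2 + q ^ 2),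
    mul_nonneg hε.le (sq_nonneg (ξ * q + r)), mul_nonneg hε.le (sq_nonneg (ξ * p - s)),
    mul_nonneg (by linarith : (0:ℝ) ≤ 1 - ε)
      (by positivity : (0:ℝ) ≤ ξ ^ 2 * (p ^ 2 + q ^ 2) + (r ^ 2 + s ^ 2)),
    sq_nonneg r, sq_nonneg s, mul_nonneg (mul_nonneg (by linarith : (0:ℝ) ≤ cU - 2) (sq_nonneg ξ))
      (by positivity : (0:ℝ) ≤ p ^ 2 + q ^ 2)]

/-- The key dissipation estimate for the derivative of the compensated energy. -/
lemma qhd_deriv (a b β μ ε ξ p q r s : ℝ) (ha : 0 < a) (hb : 0 < b) (hμ : 0 < μ)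
    (hε : 0 < ε) (hεd : ε * (a * b + b * β ^ 2 + a * μ ^ 2) ≤ μ * (a * b)) :
    -2 * (μ * ξ ^ 2) * (r ^ 2 + s ^ 2) -
        ε * ξ ^ 2 * ((a + b * ξ ^ 2) * (p ^ 2 + q ^ 2) - (r ^ 2 + s ^ 2)
          + β * (p * r + q * s) + μ * ξ * (p * s - r * q)) ≤
      -(ξ ^ 2) * (ε * ((a + b * ξ ^ 2) / 2) * (p ^ 2 + q ^ 2) + μ * (r ^ 2 + s ^ 2)) := by
  have h1 : (0:ℝ) ≤ b * (a * p + 2 * β * r) ^ 2 + b * (a * q + 2 * β * s) ^ 2 := by positivity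
  have h2 : (0:ℝ) ≤ a * (b * ξ * p + 2 * μ * s) ^ 2 + a * (b * ξ * q - 2 * μ * r) ^ 2 := by
    positivity
  have h3 : (0:ℝ) ≤ a * b * (a + b * ξ ^ 2) * (p ^ 2 + q ^ 2) := by positivity
  have hB : a * b / 2 * (a + b * ξ ^ 2) * (p ^ 2 + q ^ 2)
      - (a * b + b * β ^ 2 + a * μ ^ 2) * (r ^ 2 + s ^ 2) ≤
      a * b * ((a + b * ξ ^ 2) * (p ^ 2 + q ^ 2) - (r ^ 2 + s ^ 2)
        + β * (p * r + q * s) + μ * ξ * (p * s - r * q)) := by nlinarith [h1, h2, h3]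
  have hab : (0 : ℝ) < a * b := mul_pos ha hb
  rw [← mul_le_mul_iff_right₀ hab]
  have hBmul := mul_le_mul_of_nonneg_left hB (by positivity : (0:ℝ) ≤ ε * ξ ^ 2)
  have hF2 := mul_le_mul_of_nonneg_right hεd
    (by positivity : (0:ℝ) ≤ ξ ^ 2 * (r ^ 2 + s ^ 2))
  nlinarith [hBmul, hF2]

/-- Comparison of the dissipation with the weighted norm. -/
lemma qhd_step2 (c1 c3 ε μ ξ αv X Y : ℝ) (hc1 : 0 < c1) (hε : 0 < ε)
    (hc3a : c3 ≤ ε * c1 / 2) (hc3b : c3 ≤ μ) (hα : c1 * (1 + ξ ^ 2) ≤ αv)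
    (hX : 0 ≤ X) (hY : 0 ≤ Y) :
    -(ξ ^ 2) * (ε * (αv / 2) * X + μ * Y) ≤ -c3 * ξ ^ 2 * ((1 + ξ ^ 2) * X + Y) := by
  have h1 := mul_le_mul_of_nonneg_right hc3a
    (by positivity : (0:ℝ) ≤ ξ ^ 2 * ((1 + ξ ^ 2) * X))
  have h2 := mul_le_mul_of_nonneg_right (mul_le_mul_of_nonneg_left hα hε.le)
    (by positivity : (0:ℝ) ≤ ξ ^ 2 * X)
  have h3 := mul_le_mul_of_nonneg_right hc3b (by positivity : (0:ℝ) ≤ ξ ^ 2 * Y)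
  nlinarith [h1, h2, h3]

set_option maxHeartbeats 1600000 in
/-- Pointwise decay for the Fourier transform of the linearized viscous QHD system about a
subsonic state: any solution of `U' = −(iξA(ξ) + B(ξ))U` on `[0,∞)` satisfies
`(1+ξ²)|U₁(t)|² + |U₂(t)|² ≤ C·exp(−2ω₀ξ²t)·((1+ξ²)|U₁(0)|² + |U₂(0)|²)`. -/
theorem subsonic_pointwise_decay_original_variables
    (ρs ms μ k γ : ℝ) (hρ : 0 < ρs) (hμ : 0 < μ) (hk : 0 < k) (hγ : 1 < γ)
    (hsub : ms ^ 2 / ρs ^ 2 < γ * ρs ^ (γ - 1)) :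
    ∃ C ω₀ : ℝ, 0 < C ∧ 0 < ω₀ ∧
      ∀ ξ : ℝ, ∀ U : ℝ → Fin 2 → ℂ,
        (∀ t : ℝ, 0 ≤ t →
          HasDerivWithinAt U
            (-(((Complex.I * (ξ : ℂ)) • Asym ρs ms k γ ξ + Bsym μ ξ).mulVec (U t)))
            (Set.Ici 0) t) →
        ∀ t : ℝ, 0 ≤ t →
          (1 + ξ ^ 2) * ‖U t 0‖ ^ 2 + ‖U t 1‖ ^ 2 ≤
            C * Real.exp (-2 * ω₀ * ξ ^ 2 * t) *
              ((1 + ξ ^ 2) * ‖U 0 0‖ ^ 2 + ‖U 0 1‖ ^ 2) := by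
  set a : ℝ := γ * ρs ^ (γ - 1) - ms ^ 2 / ρs ^ 2 with ha_def
  have ha : 0 < a := sub_pos.mpr hsub
  set b : ℝ := k ^ 2 / 2 with hb_def
  have hb : 0 < b := by positivity
  set β : ℝ := 2 * ms / ρs with hβ_def
  set c1 : ℝ := min (min a b) 1 with hc1_def
  have hc1 : 0 < c1 := lt_min (lt_min ha hb) one_pos
  have hc11 : c1 ≤ 1 := min_le_right _ _
  have hc1a : c1 ≤ a := le_trans (min_le_left _ _) (min_le_left _ _)
  have hc1b : c1 ≤ b := le_trans (min_le_left _ _) (min_le_right _ _)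
  set denom : ℝ := a * b + b * β ^ 2 + a * μ ^ 2 with hden_def
  have hden : 0 < denom := by positivity
  set ε : ℝ := min (μ * (a * b) / denom) (c1 / 2) with hε_def
  have hε : 0 < ε := lt_min (by positivity) (by positivity)
  have hεc : ε ≤ c1 / 2 := min_le_right _ _
  have hε1 : ε ≤ 1 := le_trans hεc (by linarith)
  have hεd : ε * denom ≤ μ * (a * b) := by
    have h := mul_le_mul_of_nonneg_right (min_le_left (μ * (a * b) / denom) (c1 / 2)) hden.le
    calc ε * denom ≤ μ * (a * b) / denom * denom := h
      _ = μ * (a * b) := by field_simp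
  set cU : ℝ := max (max a b) 1 + 1 with hcU_def
  have hcU2 : 2 ≤ cU := by
    have : (1:ℝ) ≤ max (max a b) 1 := le_max_right _ _
    linarith
  have hcU : 0 < cU := by linarith
  have hcUa : a ≤ cU - 1 := by
    have : a ≤ max (max a b) 1 := le_trans (le_max_left _ _) (le_max_left _ _)
    linarith
  have hcUb : b ≤ cU - 1 := by
    have : b ≤ max (max a b) 1 := le_trans (le_max_right _ _) (le_max_left _ _)
    linarith
  set c3 : ℝ := min (ε * c1 / 2) μ with hc3_def
  have hc3 : 0 < c3 := lt_min (by positivity) hμ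
  clear_value a b β c1 denom ε cU c3
  refine ⟨2 * cU / c1, c3 / (2 * cU), div_pos (by linarith) hc1,
    div_pos hc3 (by linarith), ?_⟩
  intro ξ U hU
  set αv : ℝ := a + b * ξ ^ 2 with hαv_def
  have hαv1 : c1 * (1 + ξ ^ 2) ≤ αv := by
    rw [hαv_def]
    have := mul_le_mul_of_nonneg_right hc1b (sq_nonneg ξ)
    nlinarith
  have hαv2 : αv ≤ (cU - 1) * (1 + ξ ^ 2) := by
    rw [hαv_def]
    have := mul_le_mul_of_nonneg_right hcUb (sq_nonneg ξ)
    nlinarith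
  have hαs : ((alphaSym ρs ms k γ ξ : ℝ) : ℂ) = ((αv : ℝ) : ℂ) := by
    have hre : alphaSym ρs ms k γ ξ = αv := by
      rw [hαv_def, ha_def, hb_def]; rfl
    rw [hre]
  clear_value αv
  -- component derivatives
  have key : ∀ t ∈ Set.Ici (0:ℝ),
      HasDerivWithinAt (fun τ => (U τ 0).re) (ξ * (U t 1).im) (Set.Ici 0) t ∧
      HasDerivWithinAt (fun τ => (U τ 0).im) (-(ξ * (U t 1).re)) (Set.Ici 0) t ∧
      HasDerivWithinAt (fun τ => (U τ 1).re)
        (ξ * αv * (U t 0).im + ξ * β * (U t 1).im - μ * ξ ^ 2 * (U t 1).re) (Set.Ici 0) t ∧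
      HasDerivWithinAt (fun τ => (U τ 1).im)
        (-(ξ * αv * (U t 0).re) - ξ * β * (U t 1).re - μ * ξ ^ 2 * (U t 1).im)
        (Set.Ici 0) t := by
    intro t ht
    have h := hasDerivWithinAt_pi.mp (hU t ht)
    have h0 : HasDerivWithinAt (fun τ => U τ 0) (-(Complex.I * ξ * (U t 1)))
        (Set.Ici 0) t := by
      have := h 0
      rwa [show (-(((Complex.I * (ξ : ℂ)) • Asym ρs ms k γ ξ + Bsym μ ξ).mulVec (U t))) 0
          = -(Complex.I * ξ * (U t 1)) from by
        simp [Asym, Bsym, Matrix.mulVec, dotProduct, Fin.sum_univ_two, Matrix.vecHead, Matrix.vecTail]] at this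
    have h1 : HasDerivWithinAt (fun τ => U τ 1)
        (-(Complex.I * ξ * ((αv : ℝ) : ℂ) * (U t 0)
          + Complex.I * ξ * ((β : ℝ) : ℂ) * (U t 1) + ((μ * ξ ^ 2 : ℝ) : ℂ) * (U t 1)))
        (Set.Ici 0) t := by
      have := h 1
      rwa [show (-(((Complex.I * (ξ : ℂ)) • Asym ρs ms k γ ξ + Bsym μ ξ).mulVec (U t))) 1
          = -(Complex.I * ξ * ((αv : ℝ) : ℂ) * (U t 0)
            + Complex.I * ξ * ((β : ℝ) : ℂ) * (U t 1) + ((μ * ξ ^ 2 : ℝ) : ℂ) * (U t 1)) from by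
        simp only [Asym, Bsym, hαs, hβ_def]
        simp [Matrix.mulVec, dotProduct, Fin.sum_univ_two, Matrix.vecHead, Matrix.vecTail]
        ring] at this
    refine ⟨?_, ?_, ?_, ?_⟩
    · have := (Complex.reCLM.hasFDerivAt.comp_hasDerivWithinAt t h0 :)
      refine this.congr_deriv ?_
      simp [Complex.ext_iff]
    · have := (Complex.imCLM.hasFDerivAt.comp_hasDerivWithinAt t h0 :)
      refine this.congr_deriv ?_
      simp [Complex.ext_iff]
    · have h2 := (Complex.reCLM.hasFDerivAt.comp_hasDerivWithinAt t h1 :)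
      refine h2.congr_deriv ?_
      simp only [Complex.reCLM_apply, Complex.add_re, Complex.neg_re, Complex.mul_re,
        Complex.mul_im, Complex.I_re, Complex.I_im, Complex.ofReal_re, Complex.ofReal_im]
      ring
    · have h2 := (Complex.imCLM.hasFDerivAt.comp_hasDerivWithinAt t h1 :)
      refine h2.congr_deriv ?_
      simp only [Complex.imCLM_apply, Complex.add_im, Complex.neg_im, Complex.mul_re,
        Complex.mul_im, Complex.I_re, Complex.I_im, Complex.ofReal_re, Complex.ofReal_im]
      ring
  -- the compensated energy
  set E : ℝ → ℝ := fun τ =>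
    αv * ((U τ 0).re * (U τ 0).re + (U τ 0).im * (U τ 0).im) +
      ((U τ 1).re * (U τ 1).re + (U τ 1).im * (U τ 1).im) -
      ε * ξ * ((U τ 1).re * (U τ 0).im - (U τ 0).re * (U τ 1).im) with hE_def
  set E' : ℝ → ℝ := fun t =>
    -2 * (μ * ξ ^ 2) * ((U t 1).re ^ 2 + (U t 1).im ^ 2) -
      ε * ξ ^ 2 * (αv * ((U t 0).re ^ 2 + (U t 0).im ^ 2)
        - ((U t 1).re ^ 2 + (U t 1).im ^ 2)
        + β * ((U t 0).re * (U t 1).re + (U t 0).im * (U t 1).im)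
        + μ * ξ * ((U t 0).re * (U t 1).im - (U t 1).re * (U t 0).im)) with hE'_def
  clear_value E E'
  have hE : ∀ t ∈ Set.Ici (0:ℝ), HasDerivWithinAt E (E' t) (Set.Ici 0) t := by
    intro t ht
    obtain ⟨hp, hq, hr, hs⟩ := key t ht
    have comb := ((((hp.mul hp).add (hq.mul hq)).const_mul αv).add
      ((hr.mul hr).add (hs.mul hs))).sub
      (((hr.mul hq).sub (hp.mul hs)).const_mul (ε * ξ))
    rw [hE_def]
    refine comb.congr_deriv ?_
    simp only [hE'_def]
    ring
  -- the weight
  set w : ℝ := c3 / cU * ξ ^ 2 with hw_def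
  have hw : 0 ≤ w := by
    rw [hw_def]; exact mul_nonneg (div_nonneg hc3.le hcU.le) (sq_nonneg ξ)
  clear_value w
  set G : ℝ → ℝ := fun τ => E τ * Real.exp (w * τ) with hG_def
  set G' : ℝ → ℝ := fun t => E' t * Real.exp (w * t) + E t * (w * Real.exp (w * t))
    with hG'_def
  clear_value G G'
  have hexp : ∀ t : ℝ, HasDerivAt (fun τ => Real.exp (w * τ)) (w * Real.exp (w * t)) t := by
    intro t
    have h1 : HasDerivAt (fun τ : ℝ => w * τ) w t := by
      simpa using (hasDerivAt_id t).const_mul w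
    exact ((Real.hasDerivAt_exp (w * t)).comp t h1).congr_deriv (by ring)
  have hG : ∀ t ∈ Set.Ici (0:ℝ), HasDerivWithinAt G (G' t) (Set.Ici 0) t := by
    intro t ht
    rw [hG_def, hG'_def]
    exact (hE t ht).mul (hexp t).hasDerivWithinAt
  -- derivative nonpositivity
  have hmain : ∀ t : ℝ, G' t ≤ 0 := by
    intro t
    have hX : (0:ℝ) ≤ (U t 0).re ^ 2 + (U t 0).im ^ 2 := by positivity
    have hY : (0:ℝ) ≤ (U t 1).re ^ 2 + (U t 1).im ^ 2 := by positivity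
    have hd : E' t + w * E t ≤ 0 := by
      have step1 : E' t ≤ -(ξ ^ 2) * (ε * (αv / 2) * ((U t 0).re ^ 2 + (U t 0).im ^ 2)
          + μ * ((U t 1).re ^ 2 + (U t 1).im ^ 2)) := by
        have h := qhd_deriv a b β μ ε ξ (U t 0).re (U t 0).im (U t 1).re (U t 1).im
          ha hb hμ hε (by rw [← hden_def]; exact hεd)
        simpa only [hE'_def, hαv_def] using h
      have step2 : -(ξ ^ 2) * (ε * (αv / 2) * ((U t 0).re ^ 2 + (U t 0).im ^ 2)
          + μ * ((U t 1).re ^ 2 + (U t 1).im ^ 2)) ≤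
          -c3 * ξ ^ 2 * ((1 + ξ ^ 2) * ((U t 0).re ^ 2 + (U t 0).im ^ 2)
            + ((U t 1).re ^ 2 + (U t 1).im ^ 2)) :=
        qhd_step2 c1 c3 ε μ ξ αv _ _ hc1 hε
          (by rw [hc3_def]; exact min_le_left _ _)
          (by rw [hc3_def]; exact min_le_right _ _) hαv1 hX hY
      have step3 : E t ≤ cU * ((1 + ξ ^ 2) * ((U t 0).re ^ 2 + (U t 0).im ^ 2)
          + ((U t 1).re ^ 2 + (U t 1).im ^ 2)) := by
        have h := qhd_up cU ε ξ αv (U t 0).re (U t 0).im (U t 1).re (U t 1).im hcU2 hαv2 hε hε1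
        calc E t = αv * ((U t 0).re ^ 2 + (U t 0).im ^ 2)
              + ((U t 1).re ^ 2 + (U t 1).im ^ 2)
              - ε * ξ * ((U t 1).re * (U t 0).im - (U t 0).re * (U t 1).im) := by
              simp only [hE_def]; ring
          _ ≤ _ := h
      have step4 : w * E t ≤ c3 * ξ ^ 2 * ((1 + ξ ^ 2) * ((U t 0).re ^ 2 + (U t 0).im ^ 2)
          + ((U t 1).re ^ 2 + (U t 1).im ^ 2)) := by
        have h1 := mul_le_mul_of_nonneg_left step3 hw
        calc w * E t ≤ w * (cU * ((1 + ξ ^ 2) * ((U t 0).re ^ 2 + (U t 0).im ^ 2)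
              + ((U t 1).re ^ 2 + (U t 1).im ^ 2))) := h1
          _ = c3 * ξ ^ 2 * ((1 + ξ ^ 2) * ((U t 0).re ^ 2 + (U t 0).im ^ 2)
              + ((U t 1).re ^ 2 + (U t 1).im ^ 2)) := by
            rw [hw_def]; field_simp [hcU.ne']
      calc E' t + w * E t ≤ -c3 * ξ ^ 2 * ((1 + ξ ^ 2) * ((U t 0).re ^ 2 + (U t 0).im ^ 2)
            + ((U t 1).re ^ 2 + (U t 1).im ^ 2)) + c3 * ξ ^ 2 *
            ((1 + ξ ^ 2) * ((U t 0).re ^ 2 + (U t 0).im ^ 2)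
            + ((U t 1).re ^ 2 + (U t 1).im ^ 2)) := add_le_add (le_trans step1 step2) step4
        _ = 0 := by ring
    have hep : (0:ℝ) < Real.exp (w * t) := Real.exp_pos _
    have hGeq : G' t = (E' t + w * E t) * Real.exp (w * t) := by simp only [hG'_def]; ring
    rw [hGeq]
    exact mul_nonpos_of_nonpos_of_nonneg hd hep.le
  -- G is antitone on [0,∞)
  have hGcont : ContinuousOn G (Set.Ici 0) := fun t ht => (hG t ht).continuousWithinAt
  have hanti : AntitoneOn G (Set.Ici 0) := by
    apply antitoneOn_of_hasDerivWithinAt_nonpos (convex_Ici 0) hGcont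
      (f' := G')
    · intro x hx
      rw [interior_Ici] at hx ⊢
      exact (hG x (Set.mem_Ici.mpr hx.le)).mono Set.Ioi_subset_Ici_self
    · intro x _
      exact hmain x
  intro t ht
  have hGle : G t ≤ G 0 := hanti (Set.self_mem_Ici) (Set.mem_Ici.mpr ht) ht
  have hG0 : G 0 = E 0 := by simp [hG_def]
  -- final assembly
  have habs : ∀ z : ℂ, ‖z‖ ^ 2 = z.re ^ 2 + z.im ^ 2 := fun z => by
    rw [Complex.sq_norm, Complex.normSq_apply]; ring
  rw [habs, habs, habs, habs]
  set Nt : ℝ := (1 + ξ ^ 2) * ((U t 0).re ^ 2 + (U t 0).im ^ 2) +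
    ((U t 1).re ^ 2 + (U t 1).im ^ 2) with hNt_def
  set N0 : ℝ := (1 + ξ ^ 2) * ((U 0 0).re ^ 2 + (U 0 0).im ^ 2) +
    ((U 0 1).re ^ 2 + (U 0 1).im ^ 2) with hN0_def
  have hlow : c1 / 2 * Nt ≤ E t := by
    have := qhd_low c1 ε ξ αv (U t 0).re (U t 0).im (U t 1).re (U t 1).im
      hc1 hc11 hαv1 hε hεc
    calc c1 / 2 * Nt ≤ αv * ((U t 0).re ^ 2 + (U t 0).im ^ 2)
          + ((U t 1).re ^ 2 + (U t 1).im ^ 2)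
          - ε * ξ * ((U t 1).re * (U t 0).im - (U t 0).re * (U t 1).im) := this
      _ = E t := by simp only [hE_def]; ring
  have hup0 : E 0 ≤ cU * N0 := by
    have := qhd_up cU ε ξ αv (U 0 0).re (U 0 0).im (U 0 1).re (U 0 1).im hcU2 hαv2 hε hε1
    calc E 0 = αv * ((U 0 0).re ^ 2 + (U 0 0).im ^ 2)
          + ((U 0 1).re ^ 2 + (U 0 1).im ^ 2)
          - ε * ξ * ((U 0 1).re * (U 0 0).im - (U 0 0).re * (U 0 1).im) := by
            simp only [hE_def]; ring
      _ ≤ cU * N0 := this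
  have hNt : 0 ≤ Nt := by positivity
  have hN0 : 0 ≤ N0 := by positivity
  have hchain : Nt * Real.exp (w * t) ≤ 2 * cU / c1 * N0 := by
    have h1 : c1 / 2 * Nt * Real.exp (w * t) ≤ E t * Real.exp (w * t) :=
      mul_le_mul_of_nonneg_right hlow (Real.exp_pos _).le
    have h2 : E t * Real.exp (w * t) ≤ cU * N0 := by
      calc E t * Real.exp (w * t) = G t := by rw [hG_def]
        _ ≤ G 0 := hGle
        _ = E 0 := hG0
        _ ≤ cU * N0 := hup0
    have h3 : c1 / 2 * (Nt * Real.exp (w * t)) ≤ cU * N0 := by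
      calc c1 / 2 * (Nt * Real.exp (w * t)) = c1 / 2 * Nt * Real.exp (w * t) := by ring
        _ ≤ cU * N0 := le_trans h1 h2
    rw [show 2 * cU / c1 * N0 = (2 / c1) * (cU * N0) by field_simp]
    calc Nt * Real.exp (w * t) = (2 / c1) * (c1 / 2 * (Nt * Real.exp (w * t))) := by
          field_simp
      _ ≤ (2 / c1) * (cU * N0) := by
          apply mul_le_mul_of_nonneg_left h3 (by positivity)
  have hexpid : -2 * (c3 / (2 * cU)) * ξ ^ 2 * t = -(w * t) := by
    rw [hw_def]; field_simp [hcU.ne']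
  rw [hexpid, Real.exp_neg]
  have hfin := mul_le_mul_of_nonneg_right hchain (inv_nonneg.mpr (Real.exp_pos (w * t)).le)
  rw [mul_assoc, mul_inv_cancel₀ (Real.exp_pos (w * t)).ne', mul_one] at hfin
  calc Nt ≤ 2 * cU / c1 * N0 * (Real.exp (w * t))⁻¹ := hfin
    _ = 2 * cU / c1 * (Real.exp (w * t))⁻¹ * N0 := by ring
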